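/- For every φ ∈ ℝ with sin φ ≠ 0 and every Schwartz function f : ℝ^k → ℂ, the Shale–Weil operator R(k_φ) preserves the L² norm: ∫_{ℝ^k} |[R(k_φ)f](w)|² dw = ∫_{ℝ^k} |f(v)|² dv. -/

import Mathlib

open scoped RealInnerProductSpace
open MeasureTheory

/-- ℝ^k as a Euclidean space. -/
abbrev E (k : ℕ) := EuclideanSpace ℝ (Fin k)

/-- `e(t) = exp(2πit)`. -/
noncomputable def e (t : ℝ) : ℂ := Complex.exp (2 * Real.pi * Complex.I * t)

/-- The Shale–Weil operator attached to the rotation `k_φ` (for `sin φ ≠ 0`):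
`[R(k_φ)f](w) = |sin φ|^{−k/2} ∫ e((½(‖w‖²+‖v‖²)cos φ − w·v)/sin φ) f(v) dv`. -/
noncomputable def Rk {k : ℕ} (φ : ℝ) (f : E k → ℂ) : E k → ℂ :=
  fun w => ((|Real.sin φ| ^ (-(k : ℝ) / 2) : ℝ) : ℂ) *
    ∫ v : E k, e (((1 / 2) * (‖w‖ ^ 2 + ‖v‖ ^ 2) * Real.cos φ - ⟪w, v⟫) / Real.sin φ) * f v

/-! `R(k_φ)` factors as chirp ∘ Fourier ∘ chirp: with `a = cos φ / (2 sin φ)`,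
`[R(k_φ)f](w) = |sin φ|^{-k/2} e(a‖w‖²) 𝓕(e(a‖·‖²) f)(w / sin φ)`.
The chirp `e(a‖·‖²)` is unimodular and has temperate growth, so `e(a‖·‖²) f` is again Schwartz
with the same L² norm; the dilation by `1 / sin φ` scales the L² integral by `|sin φ|^k`,
which cancels the prefactor, and Plancherel for Schwartz functions finishes the proof. -/

open Complex
open scoped FourierTransform

lemma e_add (x y : ℝ) : e (x + y) = e x * e y := by
  simp only [e, ← Complex.exp_add]
  push_cast
  ring_nf

lemma norm_e (t : ℝ) : ‖e t‖ = 1 := by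
  rw [e, Complex.norm_exp]
  simp

lemma fourierChar_eq_e (t : ℝ) : (𝐞 t : ℂ) = e t := by
  rw [Real.fourierChar_apply, e]
  push_cast
  ring_nf

lemma hasDerivAt_e (t : ℝ) : HasDerivAt e (2 * Real.pi * I * e t) t := by
  have := (((hasDerivAt_id t).ofReal_comp).const_mul (2 * Real.pi * I : ℂ)).cexp
  exact this.congr_deriv (by simp only [e, id, ofReal_one]; ring)

lemma iteratedDeriv_e (n : ℕ) : iteratedDeriv n e = fun t => (2 * Real.pi * I) ^ n * e t := by
  induction n with
  | zero => simp
  | succ n ih =>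
    ext t
    rw [iteratedDeriv_succ, ih, ((hasDerivAt_e t).const_mul _).deriv]
    ring

lemma hasTemperateGrowth_e : e.HasTemperateGrowth := by
  refine ⟨?_, fun n => ⟨0, (2 * Real.pi) ^ n, fun t => ?_⟩⟩
  · exact (contDiff_const.mul ofRealCLM.contDiff).cexp
  · rw [norm_iteratedFDeriv_eq_norm_iteratedDeriv, iteratedDeriv_e]
    simp [norm_e, abs_of_pos Real.pi_pos]

section Chirp

variable {V : Type*} [NormedAddCommGroup V]

noncomputable def chirp (a : ℝ) (v : V) : ℂ := e (a * ‖v‖ ^ 2)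

lemma norm_chirp (a : ℝ) (v : V) : ‖chirp a v‖ = 1 := norm_e _

lemma hasTemperateGrowth_chirp [InnerProductSpace ℝ V] (a : ℝ) :
    (chirp a : V → ℂ).HasTemperateGrowth :=
  hasTemperateGrowth_e.comp (by fun_prop)

end Chirp

lemma rk_eq_chirp_mul_fourier {k : ℕ} (φ : ℝ) (f : E k → ℂ) (w : E k) :
    Rk φ f w = ((|Real.sin φ| ^ (-(k : ℝ) / 2) : ℝ) : ℂ) *
      (chirp (Real.cos φ / (2 * Real.sin φ)) w *
        𝓕 (chirp (Real.cos φ / (2 * Real.sin φ)) * f : E k → ℂ) ((Real.sin φ)⁻¹ • w)) := by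
  rw [Rk, Real.fourier_eq]
  congr 1
  rw [← integral_const_mul]
  congr 1 with v
  have hphase : ((1 / 2) * (‖w‖ ^ 2 + ‖v‖ ^ 2) * Real.cos φ - ⟪w, v⟫) / Real.sin φ =
      Real.cos φ / (2 * Real.sin φ) * ‖w‖ ^ 2 +
        (-⟪v, (Real.sin φ)⁻¹ • w⟫ + Real.cos φ / (2 * Real.sin φ) * ‖v‖ ^ 2) := by
    rw [real_inner_smul_right, real_inner_comm]
    ring
  rw [hphase, e_add, e_add, Circle.smul_def, fourierChar_eq_e, smul_eq_mul, Pi.mul_apply, chirp,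
    chirp]
  ring

lemma integral_norm_sq_rk {k : ℕ} {φ : ℝ} (hφ : Real.sin φ ≠ 0) (f : E k → ℂ) :
    ∫ w, ‖Rk φ f w‖ ^ 2 =
      ∫ ξ, ‖𝓕 (chirp (Real.cos φ / (2 * Real.sin φ)) * f : E k → ℂ) ξ‖ ^ 2 := by
  set F := 𝓕 (chirp (Real.cos φ / (2 * Real.sin φ)) * f : E k → ℂ)
  set s := Real.sin φ
  have hs : 0 < |s| := abs_pos.mpr hφ
  have hprefactor : ‖((|s| ^ (-(k : ℝ) / 2) : ℝ) : ℂ)‖ ^ 2 * |s ^ k| = 1 := by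
    rw [Complex.norm_real, Real.norm_of_nonneg (by positivity), abs_pow, ← Real.rpow_natCast,
      ← Real.rpow_natCast, ← Real.rpow_mul hs.le, ← Real.rpow_add hs]
    simp
  simp_rw [rk_eq_chirp_mul_fourier, norm_mul, norm_chirp, one_mul, mul_pow]
  rw [integral_const_mul, Measure.integral_comp_inv_smul volume (fun ξ => ‖F ξ‖ ^ 2) s,
    finrank_euclideanSpace_fin, smul_eq_mul, ← mul_assoc, hprefactor, one_mul]

theorem shale_weil_kphi_unitary_general {k : ℕ}
    (φ : ℝ) (hφ : Real.sin φ ≠ 0) (f : SchwartzMap (E k) ℂ) :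
    ∫ w : E k, ‖Rk φ (⇑f) w‖ ^ 2 = ∫ v : E k, ‖f v‖ ^ 2 := by
  set a := Real.cos φ / (2 * Real.sin φ)
  let g : SchwartzMap (E k) ℂ := SchwartzMap.smulLeftCLM ℂ (chirp a) f
  have hg : ⇑g = chirp a * ⇑f := funext fun v =>
    SchwartzMap.smulLeftCLM_apply_apply (hasTemperateGrowth_chirp a) f v
  calc ∫ w, ‖Rk φ (⇑f) w‖ ^ 2 = ∫ ξ, ‖𝓕 (⇑g) ξ‖ ^ 2 := by
        rw [hg]; exact integral_norm_sq_rk hφ f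
    _ = ∫ v, ‖g v‖ ^ 2 := SchwartzMap.integral_norm_sq_fourier g
    _ = ∫ v, ‖f v‖ ^ 2 := by simp only [hg, Pi.mul_apply, norm_mul, norm_chirp, one_mul]

/-- For `sin φ ≠ 0` and `f` Schwartz, `R(k_φ)` preserves the L² norm:
`∫ |[R(k_φ)f](w)|² dw = ∫ |f(v)|² dv`. -/
theorem shale_weil_kphi_unitary {k : ℕ} (hk : 0 < k)
    (φ : ℝ) (hφ : Real.sin φ ≠ 0) (f : SchwartzMap (E k) ℂ) :
    ∫ w : E k, ‖Rk φ (⇑f) w‖ ^ 2 = ∫ v : E k, ‖f v‖ ^ 2 :=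
  shale_weil_kphi_unitary_general φ hφ f
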